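/- Let d, m ≥ 1 and n = dm. For every element η ∈ ℤ/dℤ of order exactly d and every m-cycle w_m ∈ S_m, the element (w_m, 1, …, 1)·η of G = (S_m)^d ⋊ ℤ/dℤ has no nonzero fixed vector in V, i.e. it is elliptic. -/

import Mathlib

/-!
The element `g = (w, 1, …, 1)·η` walks through the blocks `0, η, 2η, …` and applies `w` only when
it re-enters block `0`, so `g ^ (k + d t)` sends `(0, j)` to `(k • η, w ^ t j)`. As `η` generates
`ℤ/dℤ` and `w` is an `m`-cycle, every coordinate lies in the `g`-orbit of `(0, 0)`: `g` is an
`n`-cycle. A fixed vector is therefore constant, and a constant vector with coordinate sum `0`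
vanishes.
-/

/-- The wreath product `(S_m)^d ⋊ ℤ/dℤ`, realized concretely as the subgroup of permutations
of the `n = d·m` coordinates (indexed by pairs `(i,j)` with `i : ZMod d` the block index and
`j : Fin m` the position within the block) that shift the block index by a constant amount. -/
def wrG (d m : ℕ) : Subgroup (Equiv.Perm (ZMod d × Fin m)) where
  carrier := {π | ∃ a : ZMod d, ∀ p : ZMod d × Fin m, (π p).1 = p.1 + a}
  one_mem' := ⟨0, fun p => by simp⟩
  mul_mem' := by
    rintro π σ ⟨a, ha⟩ ⟨b, hb⟩
    refine ⟨b + a, fun p => ?_⟩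
    have : (π * σ) p = π (σ p) := rfl
    rw [this, ha, hb, add_assoc]
  inv_mem' := by
    rintro π ⟨a, ha⟩
    refine ⟨-a, fun p => ?_⟩
    have h1 := ha (π⁻¹ p)
    rw [show π (π⁻¹ p) = p from π.apply_symm_apply p] at h1
    rw [h1, add_neg_cancel_right]

/-- The element `(σ_1, …, σ_d)·ξ^a` of the wreath product `(S_m)^d ⋊ ℤ/dℤ` (here with blocks
indexed by `ZMod d`): it sends the coordinate `(i, j)` to `(i + a, σ_{i+a} j)`, i.e. first `ξ^a`
shifts every block up by `a`, and then `σ_k` permutes the coordinates within the `k`-th block. -/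
def wrElt (d m : ℕ) (σ : ZMod d → Equiv.Perm (Fin m)) (a : ZMod d) :
    Equiv.Perm (ZMod d × Fin m) where
  toFun p := (p.1 + a, σ (p.1 + a) p.2)
  invFun p := (p.1 - a, (σ p.1)⁻¹ p.2)
  left_inv p := by simp
  right_inv p := by simp

/-- An element `g` of the wreath product is elliptic if it has no nonzero fixed vector in
`V = {x ∈ ℂ^n : x_1 + ⋯ + x_n = 0}` (the action being by permutation of coordinates). -/
def IsElliptic (d m : ℕ) [NeZero d] (g : Equiv.Perm (ZMod d × Fin m)) : Prop :=
  ∀ v : ZMod d × Fin m → ℂ,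
    (∑ p : ZMod d × Fin m, v p = 0) → (∀ p, v (g p) = v p) → v = 0

lemma exists_nsmul_eq_of_addOrderOf_eq_card {G : Type*} [AddGroup G] [Finite G]
    {η : G} (hη : addOrderOf η = Nat.card G) (x : G) : ∃ k < addOrderOf η, k • η = x := by
  classical
  have hx : x ∈ AddSubgroup.zmultiples η := by
    rw [(AddSubgroup.card_eq_iff_eq_top (AddSubgroup.zmultiples η)).1
      (by rw [Nat.card_zmultiples, hη])]
    exact AddSubgroup.mem_top x
  simpa using (isOfFinAddOrder_of_finite η).mem_zmultiples_iff_mem_range_addOrderOf.1 hx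

lemma Equiv.Perm.apply_pow_apply_eq_of_forall_apply_eq {α β : Type*} {g : Equiv.Perm α}
    {v : α → β} (hv : ∀ p, v (g p) = v p) (n : ℕ) (p : α) : v ((g ^ n) p) = v p := by
  induction n with
  | zero => rfl
  | succ n ih => rw [pow_succ', Equiv.Perm.mul_apply, hv, ih]

lemma isElliptic_of_forall_exists_pow_apply_eq {d m : ℕ} [NeZero d]
    {g : Equiv.Perm (ZMod d × Fin m)} (p₀ : ZMod d × Fin m) (hg : ∀ q, ∃ n : ℕ, (g ^ n) p₀ = q) :
    IsElliptic d m g := by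
  intro v hsum hv
  have hconst : ∀ q, v q = v p₀ := fun q => by
    obtain ⟨n, rfl⟩ := hg q
    exact Equiv.Perm.apply_pow_apply_eq_of_forall_apply_eq hv n p₀
  have : Nonempty (ZMod d × Fin m) := ⟨p₀⟩
  simp only [hconst, Finset.sum_const, Finset.card_univ, nsmul_eq_mul, mul_eq_zero,
    Nat.cast_eq_zero, Fintype.card_ne_zero, false_or] at hsum
  exact funext fun q => (hconst q).trans hsum

lemma wrElt_mem_wrG (d m : ℕ) (σ : ZMod d → Equiv.Perm (Fin m)) (a : ZMod d) :
    wrElt d m σ a ∈ wrG d m :=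
  ⟨a, fun _ => rfl⟩

section Cycle

variable {d m : ℕ} (w : Equiv.Perm (Fin m)) (η : ZMod d)

abbrev cycleElt : Equiv.Perm (ZMod d × Fin m) :=
  wrElt d m (fun i => if i = 0 then w else 1) η

lemma cycleElt_apply (p : ZMod d × Fin m) :
    cycleElt w η p = (p.1 + η, (if p.1 + η = 0 then w else 1) p.2) :=
  rfl

lemma cycleElt_pow_apply_of_lt {k : ℕ} (hk : k < addOrderOf η) (j : Fin m) :
    (cycleElt w η ^ k) (0, j) = (k • η, j) := by
  induction k with
  | zero => simp
  | succ k ih =>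
    rw [pow_succ', Equiv.Perm.mul_apply, ih (by omega), cycleElt_apply, ← succ_nsmul,
      if_neg (nsmul_ne_zero_of_lt_addOrderOf k.succ_ne_zero hk)]
    rfl

lemma cycleElt_pow_addOrderOf_apply [NeZero d] (j : Fin m) :
    (cycleElt w η ^ addOrderOf η) (0, j) = (0, w j) := by
  obtain ⟨k, hk⟩ := Nat.exists_eq_add_one_of_ne_zero (addOrderOf_pos η).ne'
  rw [hk, pow_succ', Equiv.Perm.mul_apply, cycleElt_pow_apply_of_lt w η (by omega),
    cycleElt_apply, ← succ_nsmul, ← hk, addOrderOf_nsmul_eq_zero, if_pos rfl]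

lemma cycleElt_pow_apply [NeZero d] (t : ℕ) {k : ℕ} (hk : k < addOrderOf η) (j : Fin m) :
    (cycleElt w η ^ (k + addOrderOf η * t)) (0, j) = (k • η, (w ^ t) j) := by
  induction t generalizing j with
  | zero => exact cycleElt_pow_apply_of_lt w η hk j
  | succ t ih =>
    rw [Nat.mul_succ, ← add_assoc, pow_add, Equiv.Perm.mul_apply,
      cycleElt_pow_addOrderOf_apply, ih, pow_succ, Equiv.Perm.mul_apply]

end Cycle

theorem stmt14_general (d m : ℕ) [NeZero d] (hm : 1 ≤ m)
    (wm : Equiv.Perm (Fin m)) (hwm : ∀ a b : Fin m, ∃ k : ℕ, (wm ^ k) a = b)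
    (η : ZMod d) (hη : addOrderOf η = d) :
    wrElt d m (fun i => if i = 0 then wm else 1) η ∈ wrG d m ∧
    IsElliptic d m (wrElt d m (fun i => if i = 0 then wm else 1) η) := by
  refine ⟨wrElt_mem_wrG d m _ η, isElliptic_of_forall_exists_pow_apply_eq (0, ⟨0, hm⟩) ?_⟩
  rintro ⟨i, j⟩
  obtain ⟨k, hk, rfl⟩ := exists_nsmul_eq_of_addOrderOf_eq_card
    (hη.trans (Nat.card_zmod d).symm) i
  obtain ⟨t, rfl⟩ := hwm ⟨0, hm⟩ j
  exact ⟨_, cycleElt_pow_apply wm η t hk _⟩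

/-- Let `d, m ≥ 1` and `n = dm`.  For every element `η ∈ ℤ/dℤ` of order
exactly `d` and every `m`-cycle `w_m ∈ S_m` (expressed by the condition that the cyclic
group generated by `w_m` acts transitively on the `m` letters), the element
`(w_m, 1, …, 1)·η` of `G = (S_m)^d ⋊ ℤ/dℤ` has no nonzero fixed vector in `V`,
i.e. it is elliptic. -/
theorem stmt14 (d m : ℕ) [NeZero d] (hd : 1 ≤ d) (hm : 1 ≤ m)
    (wm : Equiv.Perm (Fin m)) (hwm : ∀ a b : Fin m, ∃ k : ℕ, (wm ^ k) a = b)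
    (η : ZMod d) (hη : addOrderOf η = d) :
    wrElt d m (fun i => if i = 0 then wm else 1) η ∈ wrG d m ∧
    IsElliptic d m (wrElt d m (fun i => if i = 0 then wm else 1) η) :=
  stmt14_general d m hm wm hwm η hη
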